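/- arXiv:1601.01067 — 7 statements merged into one kernel-verified Lean document; each statement's English description precedes it below -/
import Mathlib

section
/- Let k be a field and let f₁,…,f_m ∈ k[x] be polynomials, not all zero, with d = max₁≤i≤m deg(f_i) ≥ 1. Then there exist g₁,…,g_m ∈ k[x] with deg(g_i) < d for every i such that gcd(f₁,…,f_m) = f₁g₁ + ⋯ + f_m g_m. -/
/-!
Bézout gives some representation `G = ∑ fᵢ hᵢ`. Fix `j` with `f j ≠ 0` and write `fᵢ = G qᵢ`.
Since `fᵢ q_j = f_j qᵢ`, the multiple `q_j (hᵢ / q_j)` of each coefficient can be traded for a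
summand of the `j`-th coefficient, leaving the remainders `hᵢ % q_j`, of degree
`< deg q_j ≤ d`. The accumulated `j`-th coefficient `s` then satisfies
`f_j s = G - ∑ fᵢ (hᵢ % q_j)`, whose degree is `< deg f_j + d`, so `deg s < d`.
-/

open Polynomial

theorem Ideal.mem_span_range_of_forall_dvd {R ι : Type*} [CommRing R] [IsPrincipalIdealRing R]
    {f : ι → R} {G : R} (hG : ∀ c, (∀ i, c ∣ f i) → c ∣ G) : G ∈ Ideal.span (Set.range f) := by
  set I := Ideal.span (Set.range f)
  refine I.mem_of_dvd (hG _ fun i ↦ ?_) (Submodule.IsPrincipal.generator_mem I)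
  exact (Submodule.IsPrincipal.mem_iff_generator_dvd I).1 (Ideal.subset_span ⟨i, rfl⟩)

theorem Finset.sum_mul_eq_sum_mul_mod_add {R ι : Type*} [EuclideanDomain R] (s : Finset ι)
    (f h q : ι → R) (j : ι) (hq : ∀ i, f i * q j = f j * q i) :
    ∑ i ∈ s, f i * h i = ∑ i ∈ s, f i * (h i % q j) + f j * ∑ i ∈ s, q i * (h i / q j) := by
  rw [Finset.mul_sum, ← Finset.sum_add_distrib]
  refine Finset.sum_congr rfl fun i _ ↦ ?_
  conv_lhs => rw [← EuclideanDomain.div_add_mod (h i) (q j)]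
  linear_combination (h i / q j) * hq i

namespace Polynomial

variable {k : Type*} [Field k]

theorem natDegree_lt_of_natDegree_mul_lt {R : Type*} [Semiring R] [NoZeroDivisors R]
    {f g : R[X]} {d : ℕ} (hf : f ≠ 0) (hd : 0 < d) (h : (f * g).natDegree < f.natDegree + d) :
    g.natDegree < d := by
  rcases eq_or_ne g 0 with rfl | hg
  · simpa using hd
  · rw [natDegree_mul hf hg] at h
    omega

theorem natDegree_mod_lt_of_natDegree_le {h p : k[X]} {d : ℕ} (hp : p ≠ 0) (hd : 0 < d)
    (hpd : p.natDegree ≤ d) : (h % p).natDegree < d := by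
  rcases eq_or_ne (h % p) 0 with hr | hr
  · simpa [hr] using hd
  · exact (natDegree_lt_natDegree hr (degree_mod_lt h hp)).trans_le hpd

theorem natDegree_mul_mod_lt {f h p : k[X]} {d : ℕ} (hp : p ≠ 0) (hd : 0 < d)
    (hf : f.natDegree ≤ d) : (f * (h % p)).natDegree < d + p.natDegree := by
  rcases eq_or_ne (h % p) 0 with hr | hr
  · rw [hr, mul_zero, natDegree_zero]
    omega
  · have hrp := natDegree_lt_natDegree hr (degree_mod_lt h hp)
    have hmul := natDegree_mul_le (p := f) (q := h % p)
    omega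

theorem exists_natDegree_lt_of_sum_mul_eq {ι : Type*} [Fintype ι] [DecidableEq ι]
    {f : ι → k[X]} {j : ι} (hj : f j ≠ 0) {d : ℕ} (hd : 0 < d) (hfd : ∀ i, (f i).natDegree ≤ d)
    {G : k[X]} (hG : ∀ i, G ∣ f i) {h : ι → k[X]} (hh : ∑ i, f i * h i = G) :
    ∃ g : ι → k[X], (∀ i, (g i).natDegree < d) ∧ G = ∑ i, f i * g i := by
  choose q hq using hG
  have hqj : q j ≠ 0 := fun h0 ↦ hj (by rw [hq j, h0, mul_zero])
  have hqd : (q j).natDegree ≤ (f j).natDegree :=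
    natDegree_le_of_dvd (Dvd.intro_left _ (hq j).symm) hj
  have hfq : ∀ i, f i * q j = f j * q i := fun i ↦ by rw [hq i, hq j]; ring
  set s := ∑ i, q i * (h i / q j)
  have hGs : G = ∑ i, f i * (h i % q j) + f j * s :=
    hh ▸ Finset.univ.sum_mul_eq_sum_mul_mod_add f h q j hfq
  have hs : s.natDegree < d := by
    refine natDegree_lt_of_natDegree_mul_lt hj hd ?_
    rw [show f j * s = G - ∑ i, f i * (h i % q j) by rw [hGs]; ring]
    refine (natDegree_sub_le _ _).trans_lt (max_lt ?_ ?_)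
    · have hGf : G.natDegree ≤ (f j).natDegree := natDegree_le_of_dvd (Dvd.intro _ (hq j).symm) hj
      omega
    · have hsum : (∑ i, f i * (h i % q j)).natDegree ≤ d + (f j).natDegree - 1 :=
        natDegree_sum_le_of_forall_le _ _ fun i _ ↦ by
          have := natDegree_mul_mod_lt (h := h i) hqj hd (hfd i)
          omega
      omega
  refine ⟨fun i ↦ h i % q j + if i = j then s else 0, fun i ↦ ?_, ?_⟩
  · refine (natDegree_add_le _ _).trans_lt
      (max_lt (natDegree_mod_lt_of_natDegree_le hqj hd (hqd.trans (hfd j))) ?_)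
    split_ifs
    · exact hs
    · simpa using hd
  · simp only [mul_add, mul_ite, mul_zero, Finset.sum_add_distrib, Finset.sum_ite_eq',
      Finset.mem_univ, if_true, hGs]

end Polynomial

/-- Let k be a field and f₁,…,f_m ∈ k[x], not all zero, with
d = max deg(f_i) ≥ 1. Then there exist g₁,…,g_m ∈ k[x] with deg(g_i) < d such that
gcd(f₁,…,f_m) = f₁g₁ + ⋯ + f_m g_m. -/
theorem stmt0 {k : Type*} [Field k] {m : ℕ} (f : Fin m → k[X])
    (hne : ∃ i, f i ≠ 0) (d : ℕ) (hd1 : 1 ≤ d)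
    (hd : ∀ i, (f i).natDegree ≤ d)
    (G : k[X]) (hGdvd : ∀ i, G ∣ f i)
    (hGgreatest : ∀ c : k[X], (∀ i, c ∣ f i) → c ∣ G) :
    ∃ g : Fin m → k[X], (∀ i, (g i).natDegree < d) ∧ G = ∑ i, f i * g i := by
  obtain ⟨j, hj⟩ := hne
  obtain ⟨h, hh⟩ := (Ideal.mem_span_range_iff_exists_fun (R := k[X])).1
    (Ideal.mem_span_range_of_forall_dvd hGgreatest)
  exact exists_natDegree_lt_of_sum_mul_eq hj hd1 hd hGdvd
    (by simpa only [mul_comm] using hh)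
end

section
/- Let f₁,…,f_m ∈ ℤ[x], d = max_i deg(f_i) ≥ 1, and h = max_i height(f_i). If 1 belongs to the ideal generated by f₁,…,f_m in ℚ[x], then there exist a nonzero integer δ > 0 with height(δ) ≤ d(2h + log(d+1)) and polynomials g₁,…,g_m ∈ ℤ[x] with deg(g_i) < d for all i, such that δ = f₁g₁ + ⋯ + f_m g_m. -/
/-!
Over `ℚ` the Bezout identity can be taken with `deg gᵢ < d`: reduce all but one `gᵢ` modulo a
nonzero `fⱼ`. Comparing the first `2d` coefficients, `1 = Σ fᵢ gᵢ` says that the coefficient vector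
of `1` lies in the `ℚ`-span of the integer vectors of coefficients of `fᵢ Xʲ`, `j < d`. Pick an
independent family among them and a nonsingular square minor `Q`; Cramer's rule in the form
`det Q • y = adj Q *ᵥ (Q *ᵥ y)` makes `det Q • 1` an integer combination of the `fᵢ Xʲ`, and
Hadamard's inequality bounds `(det Q)²` by a product of at most `2d` squared column norms, each at
most `(d + 1) e^{2h}` because a column has at most `d + 1` nonzero entries, all bounded by `e^h`.
-/

open Polynomial

/-- The height of an integer polynomial: the natural logarithm of the maximum of the
absolute values of its coefficients (the height of 0 is 0, since `Real.log 0 = 0`). -/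
noncomputable def polyHeight (f : Polynomial ℤ) : ℝ :=
  Real.log (((Finset.range (f.natDegree + 1)).sup fun k => (f.coeff k).natAbs : ℕ) : ℝ)

open Finset

theorem polyHeight_nonneg (f : ℤ[X]) : 0 ≤ polyHeight f :=
  Real.log_natCast_nonneg _

theorem abs_coeff_le_exp_polyHeight (f : ℤ[X]) (k : ℕ) :
    |(f.coeff k : ℝ)| ≤ Real.exp (polyHeight f) := by
  set M := (range (f.natDegree + 1)).sup fun j => (f.coeff j).natAbs
  have hcoeff : ∀ j, (f.coeff j).natAbs ≤ M := by
    intro j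
    rcases le_or_gt j f.natDegree with hj | hj
    · exact le_sup (f := fun j => (f.coeff j).natAbs) (mem_range.2 (Nat.lt_succ_of_le hj))
    · simp [coeff_eq_zero_of_natDegree_lt hj]
  rcases eq_or_ne f 0 with rfl | hf
  · simp [Real.exp_nonneg]
  have hM : (0 : ℝ) < M := by
    exact_mod_cast (Int.natAbs_pos.2 (leadingCoeff_ne_zero.2 hf)).trans_le (hcoeff _)
  rw [polyHeight, Real.exp_log hM, ← Int.cast_abs, Int.abs_eq_natAbs]
  exact_mod_cast hcoeff k

theorem Polynomial.sum_sq_coeff_le_card_support_mul (p : ℤ[X]) (s : Finset ℕ) {B : ℝ}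
    (hB : ∀ k, |(p.coeff k : ℝ)| ≤ B) :
    ∑ k ∈ s, (p.coeff k : ℝ) ^ 2 ≤ #p.support * B ^ 2 := by
  rw [← sum_filter_ne_zero]
  calc _ ≤ ∑ k ∈ p.support, (p.coeff k : ℝ) ^ 2 := by
        refine sum_le_sum_of_subset_of_nonneg (fun k hk => ?_) fun _ _ _ => sq_nonneg _
        simpa using (mem_filter.1 hk).2
    _ ≤ #p.support * B ^ 2 := by
        rw [← nsmul_eq_mul]
        refine sum_le_card_nsmul _ _ _ fun k _ => ?_
        rw [← sq_abs]
        exact pow_le_pow_left₀ (abs_nonneg _) (hB k) 2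

theorem Polynomial.card_support_mul_X_pow_le {R : Type*} [Semiring R] {f : R[X]} {d : ℕ}
    (hf : f.natDegree ≤ d) (j : ℕ) : #(f * X ^ j).support ≤ d + 1 := by
  calc #(f * X ^ j).support ≤ #(Icc j (j + d)) := by
        refine card_le_card fun k hk => ?_
        rw [mem_support_iff, coeff_mul_X_pow'] at hk
        split_ifs at hk with hjk
        · have := le_natDegree_of_ne_zero hk
          rw [mem_Icc]
          omega
        · exact absurd rfl hk
    _ = d + 1 := by simp only [Nat.card_Icc]; omega

theorem sum_sq_toFn_mul_X_pow_le {f : ℤ[X]} {d : ℕ} (hf : f.natDegree ≤ d) (n j : ℕ) :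
    ∑ k, ((toFn n (f * X ^ j) k : ℤ) : ℝ) ^ 2 ≤ (d + 1) * Real.exp (polyHeight f) ^ 2 := by
  have hB : ∀ k, |((f * X ^ j).coeff k : ℝ)| ≤ Real.exp (polyHeight f) := fun k => by
    rw [coeff_mul_X_pow']
    split_ifs
    · exact abs_coeff_le_exp_polyHeight f _
    · simp [Real.exp_nonneg]
  calc ∑ k, ((toFn n (f * X ^ j) k : ℤ) : ℝ) ^ 2
      = ∑ k ∈ range n, ((f * X ^ j).coeff k : ℝ) ^ 2 :=
        Fin.sum_univ_eq_sum_range (fun k => ((f * X ^ j).coeff k : ℝ) ^ 2) n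
    _ ≤ #(f * X ^ j).support * Real.exp (polyHeight f) ^ 2 :=
        sum_sq_coeff_le_card_support_mul _ _ hB
    _ ≤ (d + 1) * Real.exp (polyHeight f) ^ 2 := by
        gcongr
        exact_mod_cast card_support_mul_X_pow_le hf j

theorem Polynomial.toFn_map {R S : Type*} [Semiring R] [Semiring S] (n : ℕ) (φ : R →+* S)
    (p : R[X]) : toFn n (p.map φ) = φ ∘ toFn n p := by
  ext k
  simp [toFn, coeff_map]

theorem Polynomial.toFn_sum_mul_ofFn {R ι : Type*} [CommSemiring R] [DecidableEq R] [Fintype ι]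
    (n d : ℕ) (f : ι → R[X]) (w : ι → Fin d → R) :
    toFn n (∑ i, f i * ofFn d (w i)) =
      ∑ p : ι × Fin d, w p.1 p.2 • toFn n (f p.1 * X ^ (p.2 : ℕ)) := by
  simp only [Fintype.sum_prod_type, ← map_smul, ← map_sum]
  congr 1
  refine sum_congr rfl fun i _ => ?_
  rw [ofFn_eq_sum_monomial, mul_sum]
  refine sum_congr rfl fun j _ => ?_
  rw [← C_mul_X_pow_eq_monomial, smul_eq_C_mul]
  ring

theorem natDegree_lt_of_sum_mul_eq_one {K ι : Type*} [Field K] [Fintype ι] [DecidableEq ι]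
    {F g : ι → K[X]} {d : ℕ} (hd : 1 ≤ d) (hF : ∀ i, (F i).natDegree ≤ d)
    (hg : ∑ i, F i * g i = 1) {j : ι} (hj : F j ≠ 0)
    (hlt : ∀ i ≠ j, (g i).degree < (F j).degree) : (g j).natDegree < d := by
  have hpivot : (F j * g j).natDegree ≤ d + (F j).natDegree - 1 := by
    rw [eq_sub_of_add_eq ((add_sum_erase _ _ (mem_univ j)).trans hg)]
    refine (natDegree_sub_le _ _).trans (max_le (by simp) ?_)
    refine natDegree_sum_le_of_forall_le _ _ fun i hi => ?_
    rcases eq_or_ne (g i) 0 with h0 | h0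
    · simp [h0]
    · have := natDegree_lt_natDegree h0 (hlt i (ne_of_mem_erase hi))
      have := natDegree_mul_le (p := F i) (q := g i)
      have := hF i
      omega
  rcases eq_or_ne (g j) 0 with h0 | h0
  · rw [h0, natDegree_zero]
    exact hd
  · rw [natDegree_mul hj h0] at hpivot
    omega

theorem exists_sum_mul_eq_one_natDegree_lt {K ι : Type*} [Field K] [Fintype ι] [DecidableEq ι]
    {F c : ι → K[X]} {d : ℕ} (hd : 1 ≤ d) (hF : ∀ i, (F i).natDegree ≤ d)
    (hc : ∑ i, F i * c i = 1) :
    ∃ g : ι → K[X], (∀ i, (g i).natDegree < d) ∧ ∑ i, F i * g i = 1 := by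
  obtain ⟨j, hj⟩ : ∃ j, F j ≠ 0 := by
    by_contra! h
    simp [h] at hc
  let g : ι → K[X] := fun i =>
    if i = j then c j + ∑ i ∈ univ.erase j, F i * (c i / F j) else c i % F j
  have hg_j : g j = c j + ∑ i ∈ univ.erase j, F i * (c i / F j) := if_pos rfl
  have hg_ne : ∀ i ≠ j, g i = c i % F j := fun i hi => if_neg hi
  have hg_sum : ∑ i, F i * g i = 1 := by
    rw [← add_sum_erase _ _ (mem_univ j), ← hc, ← add_sum_erase _ _ (mem_univ j), hg_j,
      mul_add, mul_sum, add_assoc, ← sum_add_distrib]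
    congr 1
    refine sum_congr rfl fun i hi => ?_
    rw [hg_ne i (ne_of_mem_erase hi)]
    linear_combination F i * EuclideanDomain.div_add_mod (c i) (F j)
  have hlt : ∀ i ≠ j, (g i).degree < (F j).degree := fun i hi => by
    rw [hg_ne i hi]
    exact EuclideanDomain.mod_lt _ hj
  refine ⟨g, fun i => ?_, hg_sum⟩
  by_cases hi : i = j
  · exact hi ▸ natDegree_lt_of_sum_mul_eq_one hd hF hg_sum hj hlt
  · rcases eq_or_ne (g i) 0 with h0 | h0
    · rw [h0, natDegree_zero]
      exact hd
    · exact (natDegree_lt_natDegree h0 (hlt i hi)).trans_le (hF j)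

theorem Matrix.det_sq_le_prod_sum_sq_of_fin {r : ℕ} (M : Matrix (Fin r) (Fin r) ℝ) :
    M.det ^ 2 ≤ ∏ j, ∑ i, M i j ^ 2 := by
  have : Fact (Module.finrank ℝ (EuclideanSpace ℝ (Fin r)) = r) := ⟨finrank_euclideanSpace_fin⟩
  let b := EuclideanSpace.basisFun (Fin r) ℝ
  let col : Fin r → EuclideanSpace ℝ (Fin r) := fun j => WithLp.toLp 2 fun i => M i j
  have hM : b.toBasis.toMatrix col = M := by
    ext i j
    simp [Module.Basis.toMatrix_apply, b, col]
  have hvol := b.toBasis.orientation.abs_volumeForm_apply_le col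
  rw [b.toBasis.orientation.volumeForm_robust' b col, Module.Basis.det_apply, hM] at hvol
  calc M.det ^ 2 = |M.det| ^ 2 := (sq_abs _).symm
    _ ≤ (∏ j, ‖col j‖) ^ 2 := by gcongr
    _ = ∏ j, ∑ i, M i j ^ 2 := by
      simp [← prod_pow, EuclideanSpace.norm_sq_eq, col]

theorem Matrix.det_sq_le_prod_sum_sq {ι : Type*} [Fintype ι] [DecidableEq ι]
    (M : Matrix ι ι ℝ) : M.det ^ 2 ≤ ∏ j, ∑ i, M i j ^ 2 := by
  let e := Fintype.equivFin ι
  rw [← M.det_reindex_self e]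
  refine (det_sq_le_prod_sum_sq_of_fin _).trans_eq ?_
  rw [← e.symm.prod_comp]
  refine prod_congr rfl fun j _ => ?_
  rw [← e.symm.sum_comp]
  simp

theorem Matrix.exists_injective_det_submatrix_ne_zero {η κ K : Type*} [Fintype η] [Fintype κ]
    [DecidableEq κ] [Field K] (U : Matrix η κ K) (hU : LinearIndependent K U.col) :
    ∃ ρ : κ → η, Function.Injective ρ ∧ (U.submatrix ρ id).det ≠ 0 := by
  have hrows : Submodule.span K (Set.range U.row) = ⊤ := by
    apply Submodule.eq_top_of_finrank_eq
    rw [← U.rank_eq_finrank_span_row, U.rank_eq_finrank_span_cols, finrank_span_eq_card hU,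
      Module.finrank_fintype_fun_eq_card]
  obtain ⟨τ, b, hb, hspan, hli⟩ := exists_linearIndependent' K U.row
  have := Fintype.ofInjective b hb
  have hcard : Fintype.card κ = Fintype.card τ := by
    rw [linearIndependent_iff_card_eq_finrank_span.1 hli, Set.finrank, hspan, hrows, finrank_top,
      Module.finrank_fintype_fun_eq_card]
  let σ := Fintype.equivOfCardEq hcard
  refine ⟨b ∘ σ, hb.comp σ.injective, ?_⟩
  have hrows_li : LinearIndependent K (U.submatrix (b ∘ σ) id).row := hli.comp σ σ.injective
  exact (isUnit_iff_isUnit_det _).1 (linearIndependent_rows_iff_isUnit.1 hrows_li) |>.ne_zero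

theorem Matrix.det_smul_eq_adjugate_mulVec {κ R : Type*} [Fintype κ] [DecidableEq κ] [CommRing R]
    {A : Matrix κ κ R} {y b : κ → R} (h : A.mulVec y = b) : A.det • y = A.adjugate.mulVec b := by
  rw [← h, mulVec_mulVec, adjugate_mul, smul_mulVec, one_mulVec]

theorem det_smul_mem_span_int {η κ : Type*} [Fintype η] [Fintype κ] [DecidableEq κ]
    (u : κ → η → ℤ) (ρ : κ → η) (e : η → ℤ)
    (he : (fun k => (e k : ℚ)) ∈ Submodule.span ℚ (Set.range fun a k => (u a k : ℚ))) :
    (Matrix.of fun b a => u a (ρ b)).det • e ∈ Submodule.span ℤ (Set.range u) := by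
  set Q : Matrix κ κ ℤ := Matrix.of fun b a => u a (ρ b)
  obtain ⟨y, hy⟩ := (Submodule.mem_span_range_iff_exists_fun ℚ).1 he
  have hQy : ((Int.castRingHom ℚ).mapMatrix Q).mulVec y = Int.castRingHom ℚ ∘ (e ∘ ρ) := by
    ext b
    simpa [Matrix.mulVec, dotProduct, Q, mul_comm] using congrFun hy (ρ b)
  have hz : ∀ a, ((Q.adjugate.mulVec (e ∘ ρ) a : ℤ) : ℚ) = Q.det * y a := by
    intro a
    have hcramer := congrFun (Matrix.det_smul_eq_adjugate_mulVec hQy) a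
    rw [← RingHom.map_adjugate, ← RingHom.map_det, Pi.smul_apply, smul_eq_mul] at hcramer
    exact (RingHom.map_mulVec _ _ _ a).trans hcramer.symm
  rw [Submodule.mem_span_range_iff_exists_fun]
  refine ⟨Q.adjugate.mulVec (e ∘ ρ), ?_⟩
  ext k
  apply Int.cast_injective (α := ℚ)
  simp only [Finset.sum_apply, Pi.smul_apply, smul_eq_mul, Int.cast_sum, Int.cast_mul, hz]
  rw [← congrFun hy k]
  simp [mul_sum, mul_assoc]

theorem det_submatrix_sq_le {η κ : Type*} [Fintype η] [Fintype κ] [DecidableEq κ]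
    (u : κ → η → ℤ) {ρ : κ → η} (hρ : Function.Injective ρ) :
    (Matrix.of fun b a => u a (ρ b)).det ^ 2 ≤ ∏ a, ∑ k, u a k ^ 2 := by
  have hsub : ∀ a, ∑ b, (u a (ρ b) : ℝ) ^ 2 ≤ ∑ k, (u a k : ℝ) ^ 2 := fun a =>
    (sum_map _ ⟨ρ, hρ⟩ fun k => (u a k : ℝ) ^ 2).symm.trans_le
      (sum_le_univ_sum_of_nonneg fun _ => sq_nonneg _)
  have hR : ((Matrix.of fun b a => u a (ρ b)).det : ℝ) ^ 2 ≤ ∏ a, ∑ k, (u a k : ℝ) ^ 2 := by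
    rw [show ((Matrix.of fun b a => u a (ρ b)).det : ℝ) = (Matrix.of fun b a => (u a (ρ b) : ℝ)).det
      from RingHom.map_det (Int.castRingHom ℝ) _]
    exact (Matrix.det_sq_le_prod_sum_sq _).trans
      (prod_le_prod (fun _ _ => by positivity) fun a _ => hsub a)
  exact_mod_cast hR

theorem exists_pos_smul_mem_span_int_of_linearIndependent {η κ : Type*} [Fintype η] [Fintype κ]
    [DecidableEq κ] (u : κ → η → ℤ) (e : η → ℤ) (hu : LinearIndependent ℚ fun a k => (u a k : ℚ))
    (he : (fun k => (e k : ℚ)) ∈ Submodule.span ℚ (Set.range fun a k => (u a k : ℚ))) :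
    ∃ δ : ℤ, 0 < δ ∧ δ • e ∈ Submodule.span ℤ (Set.range u) ∧ δ ^ 2 ≤ ∏ a, ∑ k, u a k ^ 2 := by
  obtain ⟨ρ, hρ, hdet⟩ :=
    Matrix.exists_injective_det_submatrix_ne_zero (Matrix.of fun k a => (u a k : ℚ)) hu
  set Q : Matrix κ κ ℤ := Matrix.of fun b a => u a (ρ b)
  have hQ : ((Q.det : ℤ) : ℚ) = ((Matrix.of fun k a => (u a k : ℚ)).submatrix ρ id).det :=
    RingHom.map_det (Int.castRingHom ℚ) Q
  have hQdet : Q.det ≠ 0 := by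
    rw [← hQ] at hdet
    exact_mod_cast hdet
  have hmem := det_smul_mem_span_int u ρ e he
  refine ⟨|Q.det|, abs_pos.2 hQdet, ?_, (sq_abs Q.det).trans_le (det_submatrix_sq_le u hρ)⟩
  rcases abs_choice Q.det with h | h <;> rw [h]
  · exact hmem
  · rw [neg_smul]
    exact neg_mem hmem

theorem exists_pos_smul_mem_span_int {η ι : Type*} [Fintype η] [Fintype ι] (v : ι → η → ℤ)
    (e : η → ℤ) (he : (fun k => (e k : ℚ)) ∈ Submodule.span ℚ (Set.range fun i k => (v i k : ℚ))) :
    ∃ δ : ℤ, 0 < δ ∧ δ • e ∈ Submodule.span ℤ (Set.range v) ∧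
      ∃ s : Finset ι, #s ≤ Fintype.card η ∧ δ ^ 2 ≤ ∏ i ∈ s, ∑ k, v i k ^ 2 := by
  classical
  obtain ⟨κ, a, ha, hspan, hli⟩ := exists_linearIndependent' ℚ fun i k => (v i k : ℚ)
  have := Fintype.ofInjective a ha
  obtain ⟨δ, hδ, hmem, hbound⟩ :=
    exists_pos_smul_mem_span_int_of_linearIndependent (v ∘ a) e hli (hspan ▸ he)
  refine ⟨δ, hδ, Submodule.span_mono (Set.range_comp_subset_range a v) hmem,
    univ.map ⟨a, ha⟩, ?_, by rwa [prod_map]⟩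
  simpa using hli.fintype_card_le_finrank

theorem log_le_of_sq_le_prod {ι : Type*} {s : Finset ι} {N : ι → ℝ} {x A : ℝ} {n : ℕ}
    (hx : 0 < x) (hA : 1 ≤ A) (hN : ∀ i ∈ s, 0 ≤ N i ∧ N i ≤ A) (hs : #s ≤ 2 * n)
    (hxN : x ^ 2 ≤ ∏ i ∈ s, N i) : Real.log x ≤ n * Real.log A := by
  have hpow : x ^ 2 ≤ A ^ (2 * n) :=
    calc x ^ 2 ≤ ∏ i ∈ s, N i := hxN
      _ ≤ ∏ _i ∈ s, A := prod_le_prod (fun i hi => (hN i hi).1) fun i hi => (hN i hi).2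
      _ = A ^ #s := prod_const A
      _ ≤ A ^ (2 * n) := pow_le_pow_right₀ hA hs
  have hlog := Real.log_le_log (by positivity) hpow
  rw [Real.log_pow, Real.log_pow] at hlog
  push_cast at hlog
  linarith

theorem toFn_one_mem_span_of_sum_mul_eq_one {ι : Type*} [Fintype ι] {f : ι → ℤ[X]}
    {c : ι → ℚ[X]} {d : ℕ} (n : ℕ) (hc_deg : ∀ i, (c i).natDegree < d)
    (hc : ∑ i, (f i).map (Int.castRingHom ℚ) * c i = 1) :
    (fun k => ((toFn n (1 : ℤ[X]) k : ℤ) : ℚ)) ∈ Submodule.span ℚ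
      (Set.range fun (p : ι × Fin d) k => ((toFn n (f p.1 * X ^ (p.2 : ℕ)) k : ℤ) : ℚ)) := by
  rw [Submodule.mem_span_range_iff_exists_fun]
  refine ⟨fun p => toFn d (c p.1) p.2, ?_⟩
  have hcol : ∀ p : ι × Fin d, toFn n ((f p.1).map (Int.castRingHom ℚ) * X ^ (p.2 : ℕ)) =
      Int.castRingHom ℚ ∘ toFn n (f p.1 * X ^ (p.2 : ℕ)) := fun p => by
    rw [← toFn_map]
    simp
  have := toFn_sum_mul_ofFn n d (fun i => (f i).map (Int.castRingHom ℚ)) fun i => toFn d (c i)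
  simp only [ofFn_comp_toFn_eq_id_of_natDegree_lt (hc_deg _), hc, hcol] at this
  rw [← Polynomial.map_one (Int.castRingHom ℚ), toFn_map] at this
  exact this.symm

theorem C_eq_sum_mul_ofFn_of_toFn {ι : Type*} [Fintype ι] {f : ι → ℤ[X]} {d : ℕ} (hd1 : 1 ≤ d)
    (hd : ∀ i, (f i).natDegree ≤ d) {δ : ℤ} {z : ι × Fin d → ℤ}
    (hz : ∑ p, z p • toFn (2 * d) (f p.1 * X ^ (p.2 : ℕ)) = δ • toFn (2 * d) 1) :
    C δ = ∑ i, f i * ofFn d fun j => z (i, j) := by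
  have hdeg : (∑ i, f i * ofFn d fun j => z (i, j)).natDegree < 2 * d := by
    refine Nat.lt_of_le_sub_one (by omega) (natDegree_sum_le_of_forall_le _ _ fun i _ => ?_)
    have := ofFn_natDegree_lt hd1 fun j => z (i, j)
    have := hd i
    exact natDegree_mul_le.trans (by omega)
  have hCδ : (C δ).natDegree < 2 * d := by
    rw [natDegree_C]
    omega
  rw [← ofFn_comp_toFn_eq_id_of_natDegree_lt hCδ, ← ofFn_comp_toFn_eq_id_of_natDegree_lt hdeg,
    toFn_sum_mul_ofFn, ← mul_one (C δ), ← smul_eq_C_mul, map_smul, hz]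

theorem log_le_of_sq_le_prod_sum_sq_toFn {ι : Type*} {f : ι → ℤ[X]} {d : ℕ} {h : ℝ}
    (hd : ∀ i, (f i).natDegree ≤ d) (hh : ∀ i, polyHeight (f i) ≤ h) (hh0 : 0 ≤ h)
    {δ : ℤ} (hδ : 0 < δ) {s : Finset (ι × Fin d)} (hs : #s ≤ 2 * d)
    (hδs : δ ^ 2 ≤ ∏ p ∈ s, ∑ k, toFn (2 * d) (f p.1 * X ^ (p.2 : ℕ)) k ^ 2) :
    Real.log δ ≤ d * (2 * h + Real.log (d + 1)) := by
  have hA : 1 ≤ ((d : ℝ) + 1) * Real.exp h ^ 2 :=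
    one_le_mul_of_one_le_of_one_le (by simp) (one_le_pow₀ (Real.one_le_exp hh0))
  refine (log_le_of_sq_le_prod
    (N := fun p => ∑ k, ((toFn (2 * d) (f p.1 * X ^ (p.2 : ℕ)) k : ℤ) : ℝ) ^ 2)
    (by exact_mod_cast hδ) hA (fun p _ => ⟨by positivity, ?_⟩) hs
    (by exact_mod_cast hδs)).trans_eq ?_
  · exact (sum_sq_toFn_mul_X_pow_le (hd p.1) _ _).trans (by gcongr; exact hh p.1)
  · rw [Real.log_mul (by positivity) (by positivity), Real.log_pow, Real.log_exp]
    push_cast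
    ring

/-- Let f₁,…,f_m ∈ ℤ[x], d = max deg(f_i) ≥ 1, h = max height(f_i).
If 1 belongs to the ideal generated by the f_i in ℚ[x], then there exist an integer δ > 0
with height(δ) ≤ d(2h + log(d+1)) and g₁,…,g_m ∈ ℤ[x] with deg(g_i) < d such that
δ = f₁g₁ + ⋯ + f_m g_m . -/
theorem stmt1 {m : ℕ} (f : Fin m → Polynomial ℤ)
    (d : ℕ) (hd1 : 1 ≤ d) (hd : ∀ i, (f i).natDegree ≤ d)
    (h : ℝ) (hh : ∀ i, polyHeight (f i) ≤ h)
    (h1 : (1 : Polynomial ℚ) ∈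
      Ideal.span (Set.range fun i => (f i).map (Int.castRingHom ℚ))) :
    ∃ δ : ℤ, 0 < δ ∧ Real.log (δ : ℝ) ≤ (d : ℝ) * (2 * h + Real.log ((d : ℝ) + 1)) ∧
      ∃ g : Fin m → Polynomial ℤ, (∀ i, (g i).natDegree < d) ∧
        (Polynomial.C δ = ∑ i, f i * g i) := by
  obtain ⟨c₀, hc₀⟩ := (Submodule.mem_span_range_iff_exists_fun ℚ[X]).1 h1
  obtain ⟨c, hc_deg, hc⟩ := exists_sum_mul_eq_one_natDegree_lt hd1
    (fun i => natDegree_map_le.trans (hd i)) (by simpa [mul_comm] using hc₀)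
  have hh0 : 0 ≤ h := by
    obtain ⟨i⟩ : Nonempty (Fin m) := by
      by_contra hm
      simp [not_nonempty_iff.1 hm] at hc
    exact (polyHeight_nonneg _).trans (hh i)
  obtain ⟨δ, hδ, hmem, s, hs, hδs⟩ :=
    exists_pos_smul_mem_span_int _ _ (toFn_one_mem_span_of_sum_mul_eq_one (2 * d) hc_deg hc)
  obtain ⟨z, hz⟩ := (Submodule.mem_span_range_iff_exists_fun ℤ).1 hmem
  refine ⟨δ, hδ, log_le_of_sq_le_prod_sum_sq_toFn hd hh hh0 hδ (by simpa using hs) hδs,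
    fun i => ofFn d fun j => z (i, j), fun i => ofFn_natDegree_lt hd1 _, ?_⟩
  exact C_eq_sum_mul_ofFn_of_toFn hd1 hd hz
end

section
/- Let P₁ and P₂ be two monic polynomials in ℂ[x] with deg(P₁) + deg(P₂) = d. Then |P₁|·|P₂| ≤ (d+1)^{1/2}·2^d·|P₁P₂|, where |P| denotes the maximum of the absolute values (complex moduli) of the coefficients of P. -/
/-!
The Mahler measure `M` is multiplicative and sits between the coefficient heights:
Mahler's bound `‖p.coeff k‖ ≤ C(n, k) M(p) ≤ 2ⁿ M(p)` gives `|p| ≤ 2^deg p · M(p)`, and Landau's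
inequality gives `M(pq) ≤ √(deg(pq) + 1) · |pq|`. Multiplying the first bound for `p` and `q`
and applying the second to `pq` yields the inequality.
-/

open Polynomial

/-- For a polynomial over ℂ, the maximum of the moduli of its coefficients. -/
noncomputable def cnorm (P : Polynomial ℂ) : ℝ :=
  (Finset.range (P.natDegree + 1)).sup'
    (Finset.nonempty_range_iff.mpr (Nat.succ_ne_zero _))
    fun j => ‖P.coeff j‖

namespace Polynomial

theorem cnorm_eq_supNorm (p : ℂ[X]) : cnorm p = p.supNorm := by
  refine le_antisymm (Finset.sup'_le _ _ fun j _ => p.le_supNorm j) ?_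
  obtain ⟨i, hi⟩ := p.exists_eq_supNorm
  rcases le_or_gt i p.natDegree with hle | hlt
  · exact hi ▸ Finset.le_sup' (fun j => ‖p.coeff j‖) (Finset.mem_range.mpr (by omega))
  · rw [hi, coeff_eq_zero_of_natDegree_lt hlt, norm_zero]
    exact (norm_nonneg _).trans <|
      Finset.le_sup' (fun j => ‖p.coeff j‖) (Finset.mem_range.mpr p.natDegree.succ_pos)

theorem supNorm_le_two_pow_natDegree_mul_mahlerMeasure (p : ℂ[X]) :
    p.supNorm ≤ 2 ^ p.natDegree * p.mahlerMeasure := by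
  obtain ⟨i, hi⟩ := p.exists_eq_supNorm
  calc p.supNorm = ‖p.coeff i‖ := hi
    _ ≤ p.natDegree.choose i * p.mahlerMeasure := p.norm_coeff_le_choose_mul_mahlerMeasure i
    _ ≤ 2 ^ p.natDegree * p.mahlerMeasure := by
      gcongr
      · exact p.mahlerMeasure_nonneg
      · exact_mod_cast Nat.choose_le_two_pow _ _

theorem supNorm_mul_supNorm_le (p q : ℂ[X]) :
    p.supNorm * q.supNorm ≤
      √((p.natDegree + q.natDegree : ℕ) + 1) * 2 ^ (p.natDegree + q.natDegree) *
        (p * q).supNorm := by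
  have hdeg : ((p * q).natDegree : ℝ) ≤ (p.natDegree + q.natDegree : ℕ) :=
    mod_cast natDegree_mul_le
  calc p.supNorm * q.supNorm
      ≤ (2 ^ p.natDegree * p.mahlerMeasure) * (2 ^ q.natDegree * q.mahlerMeasure) :=
        mul_le_mul (supNorm_le_two_pow_natDegree_mul_mahlerMeasure p)
          (supNorm_le_two_pow_natDegree_mul_mahlerMeasure q) (supNorm_nonneg q)
          (mul_nonneg (by positivity) p.mahlerMeasure_nonneg)
    _ = 2 ^ (p.natDegree + q.natDegree) * (p * q).mahlerMeasure := by
        rw [mahlerMeasure_mul, pow_add]; ring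
    _ ≤ 2 ^ (p.natDegree + q.natDegree) * (√((p * q).natDegree + 1) * (p * q).supNorm) := by
        gcongr; exact (p * q).mahlerMeasure_le_sqrt_natDegree_add_one_mul_supNorm
    _ ≤ 2 ^ (p.natDegree + q.natDegree) *
          (√((p.natDegree + q.natDegree : ℕ) + 1) * (p * q).supNorm) := by
        gcongr; exact supNorm_nonneg _
    _ = _ := by ring

end Polynomial

theorem stmt2_general (P₁ P₂ : Polynomial ℂ)
    (d : ℕ) (hd : P₁.natDegree + P₂.natDegree = d) :
    cnorm P₁ * cnorm P₂ ≤ Real.sqrt ((d : ℝ) + 1) * 2 ^ d * cnorm (P₁ * P₂) := by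
  subst hd
  simpa only [cnorm_eq_supNorm] using supNorm_mul_supNorm_le P₁ P₂

/-- Gel'fond: Let P₁, P₂ be monic polynomials in ℂ[x] with
deg(P₁) + deg(P₂) = d. Then |P₁|·|P₂| ≤ (d+1)^{1/2}·2^d·|P₁P₂|. -/
theorem stmt2 (P₁ P₂ : Polynomial ℂ) (h₁ : P₁.Monic) (h₂ : P₂.Monic)
    (d : ℕ) (hd : P₁.natDegree + P₂.natDegree = d) :
    cnorm P₁ * cnorm P₂ ≤ Real.sqrt ((d : ℝ) + 1) * 2 ^ d * cnorm (P₁ * P₂) :=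
  stmt2_general P₁ P₂ d hd
end

section
/- Let f₁,…,f_m ∈ ℤ[x] be polynomials, not all zero, with d = max_i deg(f_i) and h = max_i height(f_i), and let g = gcd(f₁,…,f_m) in ℤ[x]. Then height(g) ≤ (1/2)·log(d+1) + d·log 2 + h; equivalently |g| ≤ (d+1)^{1/2}·2^d·max_i|f_i|. -/
/-!
Write `f i = g * q` for some `f i ≠ 0`. The Mahler measure `M` is multiplicative and `M q ≥ 1`
for a nonzero integer polynomial, so `M g ≤ M (f i)`. By Vieta each coefficient of `g` is at most
`C(deg g, k) · M g ≤ 2 ^ d · M g`, and Landau's inequality gives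
`M (f i) ≤ √(deg (f i) + 1) · |f i|`.
-/

open Polynomial

namespace Polynomial

theorem supNorm_map_of_isometry {A B : Type*} [SeminormedRing A] [SeminormedRing B]
    {v : A →+* B} (hv : Isometry v) (p : A[X]) : (p.map v).supNorm = p.supNorm := by
  refine (isGreatest_supNorm _).unique ?_
  simpa only [coeff_map, hv.norm_map_of_map_zero (map_zero v)] using isGreatest_supNorm p

theorem supNorm_pos {A : Type*} [NormedRing A] {p : A[X]} (hp : p ≠ 0) : 0 < p.supNorm :=
  p.supNorm_nonneg.lt_of_ne' (mt p.supNorm_eq_zero_iff.1 hp)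

theorem supNorm_le_two_pow_mul_sqrt_mul_supNorm_of_dvd {g f : ℤ[X]} (hgf : g ∣ f) (hf : f ≠ 0) :
    g.supNorm ≤ 2 ^ g.natDegree * √(f.natDegree + 1) * f.supNorm := by
  obtain ⟨q, rfl⟩ := hgf
  have hι : Isometry (Int.castRingHom ℂ) := Complex.isometry_intCast
  obtain ⟨i, hi⟩ := g.exists_eq_supNorm
  have hM := norm_coeff_le_choose_mul_mahlerMeasure_of_one_le_mahlerMeasure i
    (g.map (Int.castRingHom ℂ)) _ (one_le_mahlerMeasure_of_ne_zero (right_ne_zero_of_mul hf))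
  rw [← Polynomial.map_mul] at hM
  have hL := mahlerMeasure_le_sqrt_natDegree_add_one_mul_supNorm ((g * q).map (Int.castRingHom ℂ))
  simp only [natDegree_map_eq_of_injective (Int.castRingHom ℂ).injective_int, coeff_map,
    supNorm_map_of_isometry hι, hι.norm_map_of_map_zero (map_zero _)] at hM hL
  calc g.supNorm = ‖g.coeff i‖ := hi
    _ ≤ g.natDegree.choose i * ((g * q).map (Int.castRingHom ℂ)).mahlerMeasure := hM
    _ ≤ 2 ^ g.natDegree * (√((g * q).natDegree + 1) * (g * q).supNorm) := by
      gcongr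
      · exact mahlerMeasure_nonneg _
      · exact_mod_cast Nat.choose_le_two_pow _ _
    _ = _ := (mul_assoc _ _ _).symm

end Polynomial

theorem polyHeight_eq_log_supNorm (f : ℤ[X]) : polyHeight f = Real.log f.supNorm := by
  unfold polyHeight
  congr 1
  refine IsGreatest.unique ⟨?_, ?_⟩ f.isGreatest_supNorm
  · obtain ⟨k, -, hk⟩ := Finset.exists_mem_eq_sup (Finset.range (f.natDegree + 1))
      ⟨0, by simp⟩ fun k => (f.coeff k).natAbs
    exact ⟨k, by simp [hk, Int.norm_eq_abs]⟩
  · rintro _ ⟨k, rfl⟩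
    rcases le_or_gt k f.natDegree with hk | hk
    · have := Finset.le_sup (f := fun k => (f.coeff k).natAbs) (Finset.mem_range_succ_iff.2 hk)
      simpa [Int.norm_eq_abs] using (Nat.cast_le (α := ℝ)).2 this
    · simp [coeff_eq_zero_of_natDegree_lt hk]

theorem stmt3_general {m : ℕ} (f : Fin m → Polynomial ℤ) (hne : ∃ i, f i ≠ 0)
    (d : ℕ) (hd : ∀ i, (f i).natDegree ≤ d)
    (h : ℝ) (hh : ∀ i, polyHeight (f i) ≤ h)
    (g : Polynomial ℤ) (hgdvd : ∀ i, g ∣ f i) :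
    polyHeight g ≤ (1 / 2) * Real.log ((d : ℝ) + 1) + (d : ℝ) * Real.log 2 + h := by
  obtain ⟨i, hi⟩ := hne
  have hg : g ≠ 0 := ne_zero_of_dvd_ne_zero hi (hgdvd i)
  have hbound : g.supNorm ≤ 2 ^ d * √(d + 1) * (f i).supNorm := by
    refine (supNorm_le_two_pow_mul_sqrt_mul_supNorm_of_dvd (hgdvd i) hi).trans ?_
    have hdeg_g : g.natDegree ≤ d := (natDegree_le_of_dvd (hgdvd i) hi).trans (hd i)
    have := (f i).supNorm_nonneg
    gcongr
    exacts [one_le_two, hd i]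
  have hhi := hh i
  rw [polyHeight_eq_log_supNorm] at hhi ⊢
  calc Real.log g.supNorm ≤ Real.log (2 ^ d * √(d + 1) * (f i).supNorm) :=
        Real.log_le_log (supNorm_pos hg) hbound
    _ = d * Real.log 2 + Real.log (d + 1) / 2 + Real.log (f i).supNorm := by
        rw [Real.log_mul (by positivity) (supNorm_pos hi).ne', Real.log_mul (by positivity)
          (by positivity), Real.log_pow, Real.log_sqrt (by positivity)]
    _ ≤ _ := by linarith

/-- Let f₁,…,f_m ∈ ℤ[x], not all zero, with d = max deg(f_i) and
h = max height(f_i), and let g = gcd(f₁,…,f_m) in ℤ[x].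
Then height(g) ≤ (1/2)·log(d+1) + d·log 2 + h. -/
theorem stmt3 {m : ℕ} (f : Fin m → Polynomial ℤ) (hne : ∃ i, f i ≠ 0)
    (d : ℕ) (hd : ∀ i, (f i).natDegree ≤ d)
    (h : ℝ) (hh : ∀ i, polyHeight (f i) ≤ h)
    (g : Polynomial ℤ) (hgdvd : ∀ i, g ∣ f i)
    (hggreatest : ∀ c : Polynomial ℤ, (∀ i, c ∣ f i) → c ∣ g) :
    polyHeight g ≤ (1 / 2) * Real.log ((d : ℝ) + 1) + (d : ℝ) * Real.log 2 + h :=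
  stmt3_general f hne d hd h hh g hgdvd
end

section
/- Let B = {b₁,…,b_k} be a reduced Gröbner basis of a nonzero ideal of ℤ[x], where each b_i has positive leading coefficient c_i and degree d_i, indexed so that the leading terms are increasing. Then: (1) 0 ≤ d₁ < d₂ < ⋯ < d_k; (2) c_k ∣ c_{k−1} ∣ ⋯ ∣ c₁ and c_i ≠ c_{i+1} for 1 ≤ i ≤ k−1; (3) the integer c_i/c_k divides b_i (i.e., divides every coefficient of b_i) for 1 ≤ i < k, and the primitive part of b₁ divides b_i in ℤ[x] for every 1 < i ≤ k. -/
open Polynomial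

/-- A finite set `G` of nonzero polynomials in ℤ[x] with positive leading coefficients
is a Gröbner basis of an ideal `I ⊆ ℤ[x]` if `G ⊆ I`, `G` generates `I`, and for
every nonzero `f ∈ I` there is a `g ∈ G` with `deg g ≤ deg f` and `lc g ∣ lc f`. -/
def IsGroebnerBasis (G : Finset (Polynomial ℤ)) (I : Ideal (Polynomial ℤ)) : Prop :=
  (∀ g ∈ G, g ≠ 0 ∧ 0 < g.leadingCoeff) ∧
  (↑G : Set (Polynomial ℤ)) ⊆ (I : Set (Polynomial ℤ)) ∧
  Ideal.span (↑G : Set (Polynomial ℤ)) = I ∧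
  ∀ f ∈ I, f ≠ 0 → ∃ g ∈ G, g.natDegree ≤ Polynomial.natDegree f ∧
    g.leadingCoeff ∣ f.leadingCoeff

/-- A Gröbner basis `G` is reduced if moreover for all `g ≠ g'` in `G` and every
`k ≥ deg g'`, the coefficient of `x^k` in `g` lies in `[0, lc g')`. -/
def IsReducedGroebnerBasis (G : Finset (Polynomial ℤ)) (I : Ideal (Polynomial ℤ)) : Prop :=
  IsGroebnerBasis G I ∧
  ∀ g ∈ G, ∀ g' ∈ G, g ≠ g' → ∀ k : ℕ, g'.natDegree ≤ k →
    0 ≤ g.coeff k ∧ g.coeff k < g'.leadingCoeff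

/-!
In a reduced Gröbner basis, if `g ≠ h` and `deg g ≤ deg h` then `lc h < lc g`, since `lc h` is a
coefficient of `h` in degree at least `deg g` and reducedness bounds those by `lc g`. So degrees
are distinct, and the Bézout combination `u xᴺ g + v h`, of leading coefficient
`gcd (lc g) (lc h)` and degree `deg h`, can only be reduced by `h` itself: `lc h ∣ lc g` whenever
`deg g ≤ deg h`.

For the divisibility by `b₁`, go up the basis: if `h` immediately precedes `g` and
`lc h = r · lc g`, then `r g - xᴺ h` lies in the ideal and has degree below `deg g`, so Gröbner
reduction writes it as a combination of basis elements of degree at most `deg h`. Inductively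
`lc g · p ∣ m · g` for all `g` as soon as it holds for `b₁`; with `p = primPart b₁` and
`m = lc p` it holds for `b₁` with equality, and Gauss's lemma finishes the proof.
-/

namespace Polynomial

variable {R : Type*} [CommRing R] [IsDomain R]

theorem degree_sub_C_mul_X_pow_mul_lt {f g : R[X]} {q : R} (hf : f ≠ 0)
    (hdeg : g.natDegree ≤ f.natDegree) (hq : f.leadingCoeff = g.leadingCoeff * q) :
    (f - C q * X ^ (f.natDegree - g.natDegree) * g).degree < f.degree := by
  have hlc : g.leadingCoeff * q ≠ 0 := hq ▸ leadingCoeff_ne_zero.mpr hf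
  have hg : g ≠ 0 := leadingCoeff_ne_zero.mp (left_ne_zero_of_mul hlc)
  refine degree_sub_lt_left ?_ hf ?_
  · rw [degree_mul, degree_C_mul_X_pow _ (right_ne_zero_of_mul hlc), degree_eq_natDegree hg,
      degree_eq_natDegree hf, ← Nat.cast_add, Nat.sub_add_cancel hdeg]
  · rw [leadingCoeff_mul, leadingCoeff_C_mul_X_pow, hq, mul_comm]

theorem IsPrimitive.dvd_of_dvd_C_mul [NormalizedGCDMonoid R] {p q : R[X]} {a : R}
    (hp : p.IsPrimitive) (ha : a ≠ 0) (h : p ∣ C a * q) : p ∣ q := by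
  rcases eq_or_ne q 0 with rfl | hq
  · exact dvd_zero p
  have haq : C a * q ≠ 0 := mul_ne_zero (C_ne_zero.mpr ha) hq
  rw [← hp.dvd_primPart_iff_dvd haq] at h
  rw [← hp.dvd_primPart_iff_dvd hq]
  exact h.trans <| (associated_primPart_mul haq).dvd.trans <|
    (isUnit_primPart_C a).mul_left_dvd.mpr dvd_rfl

end Polynomial

namespace IsGroebnerBasis

variable {G : Finset ℤ[X]} {I : Ideal ℤ[X]}

theorem mem_span_of_degree_lt (hG : IsGroebnerBasis G I) {n : ℕ} {f : ℤ[X]} (hf : f ∈ I)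
    (hn : f.degree < n) : f ∈ Ideal.span {g | g ∈ G ∧ g.natDegree < n} := by
  induction f using degree_lt_wf.induction with
  | _ f ih =>
  rcases eq_or_ne f 0 with rfl | hf0
  · exact zero_mem _
  obtain ⟨g, hgG, hdeg, q, hq⟩ := hG.2.2.2 f hf hf0
  set r := f - C q * X ^ (f.natDegree - g.natDegree) * g with hr_def
  have hr : r.degree < f.degree := degree_sub_C_mul_X_pow_mul_lt hf0 hdeg hq
  have hrI : r ∈ I := I.sub_mem hf (I.mul_mem_left _ (hG.2.1 hgG))
  have hg : g ∈ Ideal.span {g | g ∈ G ∧ g.natDegree < n} :=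
    Ideal.subset_span ⟨hgG, hdeg.trans_lt ((natDegree_lt_iff_degree_lt hf0).mpr hn)⟩
  rw [← sub_add_cancel f (C q * X ^ (f.natDegree - g.natDegree) * g), ← hr_def]
  exact add_mem (ih r hr hrI (hr.trans hn)) (Ideal.mul_mem_left _ _ hg)

end IsGroebnerBasis

namespace IsReducedGroebnerBasis

variable {G : Finset ℤ[X]} {I : Ideal ℤ[X]}

theorem leadingCoeff_lt (hG : IsReducedGroebnerBasis G I) {g h : ℤ[X]} (hg : g ∈ G)
    (hh : h ∈ G) (hne : g ≠ h) (hdeg : g.natDegree ≤ h.natDegree) :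
    h.leadingCoeff < g.leadingCoeff :=
  (hG.2 h hh g hg hne.symm h.natDegree hdeg).2

theorem eq_of_natDegree_eq (hG : IsReducedGroebnerBasis G I) {g h : ℤ[X]} (hg : g ∈ G)
    (hh : h ∈ G) (hdeg : g.natDegree = h.natDegree) : g = h := by
  by_contra hne
  exact (hG.leadingCoeff_lt hg hh hne hdeg.le).asymm
    (hG.leadingCoeff_lt hh hg (Ne.symm hne) hdeg.ge)

theorem leadingCoeff_dvd (hG : IsReducedGroebnerBasis G I) {g h : ℤ[X]} (hg : g ∈ G)
    (hh : h ∈ G) (hdeg : g.natDegree ≤ h.natDegree) : h.leadingCoeff ∣ g.leadingCoeff := by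
  have hpos : 0 < h.leadingCoeff := (hG.1.1 h hh).2
  set d : ℤ := (Int.gcd g.leadingCoeff h.leadingCoeff : ℤ)
  have hd : 0 < d := Int.natCast_pos.mpr (Int.gcd_pos_of_ne_zero_right _ hpos.ne')
  set f := C (Int.gcdA g.leadingCoeff h.leadingCoeff) * X ^ (h.natDegree - g.natDegree) * g +
    C (Int.gcdB g.leadingCoeff h.leadingCoeff) * h
  have hfI : f ∈ I :=
    I.add_mem (I.mul_mem_left _ (hG.1.2.1 hg)) (I.mul_mem_left _ (hG.1.2.1 hh))
  have hcoeff : f.coeff h.natDegree = d := by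
    simp only [f, d, coeff_add, coeff_C_mul, mul_assoc, coeff_X_pow_mul',
      if_pos (Nat.sub_le _ _), Nat.sub_sub_self hdeg, Int.gcd_eq_gcd_ab, leadingCoeff]
    ring
  have hfdeg : f.natDegree = h.natDegree := by
    refine natDegree_eq_of_le_of_coeff_ne_zero ?_ (hcoeff ▸ hd.ne')
    refine natDegree_add_le_of_degree_le ?_ (natDegree_C_mul_le _ _)
    grw [natDegree_mul_le, natDegree_C_mul_X_pow_le]
    omega
  have hflc : f.leadingCoeff = d := by rw [leadingCoeff, hfdeg, hcoeff]
  have hf0 : f ≠ 0 := fun h0 => hd.ne' (by rw [← hcoeff, h0, coeff_zero])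
  obtain ⟨g', hg', hdeg', hdvd⟩ := hG.1.2.2.2 f hfI hf0
  rw [hfdeg] at hdeg'
  rw [hflc] at hdvd
  obtain rfl : g' = h := by
    by_contra hne
    exact (Int.le_of_dvd hpos (hdvd.trans (Int.gcd_dvd_right _ _))).not_gt
      (hG.leadingCoeff_lt hg' hh hne hdeg')
  exact hdvd.trans (Int.gcd_dvd_left _ _)

theorem C_leadingCoeff_mul_dvd (hG : IsReducedGroebnerBasis G I) {g₀ p : ℤ[X]} {m : ℤ}
    (hg₀ : g₀ ∈ G) (hmin : ∀ g ∈ G, g₀.natDegree ≤ g.natDegree)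
    (hbase : C g₀.leadingCoeff * p ∣ C m * g₀) {g : ℤ[X]} (hg : g ∈ G) :
    C g.leadingCoeff * p ∣ C m * g := by
  induction hn : g.natDegree using Nat.strong_induction_on generalizing g with
  | _ n ih =>
  subst hn
  rcases (hmin g hg).eq_or_lt with hdeg | hdeg
  · rwa [← hG.eq_of_natDegree_eq hg₀ hg hdeg]
  obtain ⟨h, hh, hmax⟩ := (G.filter (·.natDegree < g.natDegree)).exists_max_image natDegree
    ⟨g₀, Finset.mem_filter.mpr ⟨hg₀, hdeg⟩⟩
  rw [Finset.mem_filter] at hh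
  obtain ⟨K, mem_K⟩ :
      ∃ K : Ideal ℤ[X], ∀ f, f ∈ K ↔ C h.leadingCoeff * p ∣ C m * f :=
    ⟨(Ideal.span {C h.leadingCoeff * p}).colon {C m}, fun f => by
      rw [Submodule.mem_colon_singleton, smul_eq_mul, mul_comm f, Ideal.mem_span_singleton]⟩
  have hlow : ∀ g' ∈ G, g'.natDegree < g.natDegree → g' ∈ K := fun g' hg' hlt =>
    (mem_K g').mpr <| (mul_dvd_mul_right (map_dvd C (hG.leadingCoeff_dvd hg' hh.1
      (hmax g' (Finset.mem_filter.mpr ⟨hg', hlt⟩)))) p).trans (ih _ hlt hg' rfl)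
  obtain ⟨r, hr⟩ := hG.leadingCoeff_dvd hh.1 hg hh.2.le
  have hh0 : h ≠ 0 := (hG.1.1 h hh.1).1
  have hg0 : g ≠ 0 := (hG.1.1 g hg).1
  have hr0 : r ≠ 0 := right_ne_zero_of_mul (hr ▸ leadingCoeff_ne_zero.mpr hh0)
  set f := C r * g - h * X ^ (g.natDegree - h.natDegree) with hf_def
  have hfI : f ∈ I :=
    I.sub_mem (I.mul_mem_left _ (hG.1.2.1 hg)) (I.mul_mem_right _ (hG.1.2.1 hh.1))
  have hf : f.degree < g.natDegree := by
    have hrg : (C r * g).degree = g.natDegree := by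
      rw [degree_C_mul hr0, degree_eq_natDegree hg0]
    refine hrg ▸ degree_sub_lt_left ?_ (mul_ne_zero (C_ne_zero.mpr hr0) hg0) ?_
    · rw [hrg, degree_mul_X_pow, degree_eq_natDegree hh0]
      norm_cast
      omega
    · rw [leadingCoeff_mul, leadingCoeff_C, leadingCoeff_mul_X_pow, hr, mul_comm]
  have hfK : f ∈ K := Ideal.span_le.mpr (fun g' hg' => hlow g' hg'.1 hg'.2)
    (hG.1.mem_span_of_degree_lt hfI hf)
  have hrg : C r * g ∈ K := by
    have := add_mem hfK (K.mul_mem_right (X ^ (g.natDegree - h.natDegree)) (hlow h hh.1 hh.2))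
    rwa [hf_def, sub_add_cancel] at this
  rw [mem_K, hr, C_mul] at hrg
  refine (mul_dvd_mul_iff_left (C_ne_zero.mpr hr0)).mp ?_
  convert hrg using 1 <;> ring

theorem C_leadingCoeff_mul_primPart_dvd (hG : IsReducedGroebnerBasis G I) {g₀ g : ℤ[X]}
    (hg₀ : g₀ ∈ G) (hmin : ∀ g ∈ G, g₀.natDegree ≤ g.natDegree) (hg : g ∈ G) :
    C g.leadingCoeff * g₀.primPart ∣ C g₀.primPart.leadingCoeff * g := by
  have hlc : g₀.leadingCoeff = g₀.content * g₀.primPart.leadingCoeff := by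
    conv_lhs => rw [g₀.eq_C_content_mul_primPart, leadingCoeff_mul, leadingCoeff_C]
  refine hG.C_leadingCoeff_mul_dvd hg₀ hmin (dvd_of_eq ?_) hg
  rw [hlc, C_mul, mul_right_comm, ← g₀.eq_C_content_mul_primPart, mul_comm]

theorem primPart_dvd (hG : IsReducedGroebnerBasis G I) {g₀ g : ℤ[X]} (hg₀ : g₀ ∈ G)
    (hmin : ∀ g ∈ G, g₀.natDegree ≤ g.natDegree) (hg : g ∈ G) : g₀.primPart ∣ g :=
  g₀.isPrimitive_primPart.dvd_of_dvd_C_mul (leadingCoeff_ne_zero.mpr g₀.primPart_ne_zero)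
    ((dvd_mul_left _ _).trans (hG.C_leadingCoeff_mul_primPart_dvd hg₀ hmin hg))

theorem C_leadingCoeff_div_dvd (hG : IsReducedGroebnerBasis G I) {g h : ℤ[X]} (hg : g ∈ G)
    (hh : h ∈ G) (hdeg : g.natDegree ≤ h.natDegree) :
    C (g.leadingCoeff / h.leadingCoeff) ∣ g := by
  obtain ⟨g₀, hg₀, hmin⟩ := G.exists_min_image natDegree ⟨g, hg⟩
  obtain ⟨t, ht⟩ := leadingCoeff_dvd_leadingCoeff (hG.primPart_dvd hg₀ hmin hh)
  obtain ⟨s, hs⟩ := hG.leadingCoeff_dvd hg hh hdeg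
  have hm : g₀.primPart.leadingCoeff ≠ 0 := leadingCoeff_ne_zero.mpr g₀.primPart_ne_zero
  have hdvd := (dvd_mul_right _ _).trans (hG.C_leadingCoeff_mul_primPart_dvd hg₀ hmin hg)
  rw [hs, ht, mul_assoc, C_mul, mul_dvd_mul_iff_left (C_ne_zero.mpr hm), C_mul] at hdvd
  rw [hs, Int.mul_ediv_cancel_left _ (ht ▸ (hG.1.1 h hh).2.ne')]
  exact (dvd_mul_left _ _).trans hdvd

end IsReducedGroebnerBasis

/-- Let B = {b₁,…,b_k} be a reduced Gröbner basis of a nonzero ideal of ℤ[x],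
each b_i with positive leading coefficient c_i and degree d_i, indexed with increasing
leading terms. Then (1) d₁ < ⋯ < d_k; (2) c_k ∣ ⋯ ∣ c₁ and c_i ≠ c_{i+1};
(3) c_i/c_k divides every coefficient of b_i for i < k, and the primitive part of b₁
divides b_i in ℤ[x] for i > 1. -/
theorem stmt6 {k : ℕ} (hk : 0 < k) (b : Fin k → Polynomial ℤ)
    (I : Ideal (Polynomial ℤ))
    (hinc : ∀ i j : Fin k, i < j →
      (b i).natDegree < (b j).natDegree ∨
      ((b i).natDegree = (b j).natDegree ∧ (b i).leadingCoeff < (b j).leadingCoeff))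
    (hB : IsReducedGroebnerBasis (Finset.image b Finset.univ) I) :
    (StrictMono fun i : Fin k => (b i).natDegree) ∧
    (∀ i j : Fin k, i ≤ j → (b j).leadingCoeff ∣ (b i).leadingCoeff) ∧
    (∀ i j : Fin k, (j : ℕ) = (i : ℕ) + 1 → (b i).leadingCoeff ≠ (b j).leadingCoeff) ∧
    (∀ i : Fin k, (i : ℕ) < k - 1 →
      Polynomial.C ((b i).leadingCoeff / (b ⟨k - 1, by omega⟩).leadingCoeff) ∣ b i) ∧
    (∀ i : Fin k, 0 < (i : ℕ) → (b ⟨0, hk⟩).primPart ∣ b i) := by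
  have mem (i : Fin k) : b i ∈ Finset.image b Finset.univ :=
    Finset.mem_image_of_mem b (Finset.mem_univ i)
  have hmono : StrictMono fun i : Fin k => (b i).natDegree := fun i j hij =>
    (hinc i j hij).resolve_right fun ⟨hdeg, hlt⟩ =>
      hlt.ne (congrArg leadingCoeff (hB.eq_of_natDegree_eq (mem i) (mem j) hdeg))
  have hmin : ∀ g ∈ Finset.image b Finset.univ, (b ⟨0, hk⟩).natDegree ≤ g.natDegree :=
    Finset.forall_mem_image.mpr fun i _ => hmono.monotone (Fin.le_def.mpr (Nat.zero_le _))
  refine ⟨hmono, fun i j hij => hB.leadingCoeff_dvd (mem i) (mem j) (hmono.monotone hij),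
    fun i j hj => ?_, fun i _ => ?_, fun i _ => hB.primPart_dvd (mem _) hmin (mem i)⟩
  · have hij : i < j := Fin.lt_def.mpr (by omega)
    exact (hB.leadingCoeff_lt (mem i) (mem j) (fun h => (hmono hij).ne (congrArg natDegree h))
      (hmono hij).le).ne'
  · exact hB.C_leadingCoeff_div_dvd (mem i) (mem _)
      (hmono.monotone (Fin.le_def.mpr (Nat.le_sub_one_of_lt i.2)))
end

section
/- Let F ∈ ℤ[x]^{n×m} be a matrix with polynomial entries and d = deg(F) the maximum degree of its entries. Then the ℚ[x]-module Sol_{ℚ[x]}(F) = {Y ∈ ℚ[x]^m : FY = 0} is generated by finitely many vectors lying in ℤ[x]^m, each of whose entries has degree at most n·d. -/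
/-!
Over `ℚ(x)` choose a nonsingular `r × r` minor `B = F[ρ, σ]` of `F` whose rows `ρ` span the row
space, so that `r ≤ n` and `F` has the same polynomial solutions as `F[ρ, -]`. Cramer's rule gives
a matrix `V` whose columns are solutions with entries of degree `≤ r d` and which satisfies
`V Y = det B • Y` for every solution `Y`. Dividing the entries of `Y` by `det B` with remainder
writes `Y` as a `ℚ[x]`-combination of columns of `V` plus a solution `Z` with
`det B • Z = V (Y mod det B)`, so `Z` also has degree `≤ n d`. Solutions of degree `≤ n d` form a
finite-dimensional `ℚ`-space, and clearing denominators in a finite spanning set of it gives the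
generators in `ℤ[x]^m`.
-/

open Polynomial

namespace Polynomial

variable {R : Type*} [CommRing R]

theorem natDegree_det_le {n : Type*} [Fintype n] [DecidableEq n] {M : Matrix n n R[X]} {d : ℕ}
    (hM : ∀ i j, (M i j).natDegree ≤ d) : M.det.natDegree ≤ Fintype.card n * d := by
  rw [Matrix.det_apply']
  refine natDegree_sum_le_of_forall_le _ _ fun τ _ => natDegree_mul_le.trans ?_
  rw [natDegree_intCast, zero_add]
  refine (natDegree_prod_le _ _).trans ?_
  exact (Finset.sum_le_card_nsmul _ _ d fun i _ => hM (τ i) i).trans_eq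
    (by rw [smul_eq_mul, Finset.card_univ])

theorem natDegree_adjugate_mul_apply_le {κ ι : Type*} [Fintype κ] [DecidableEq κ]
    {B : Matrix κ κ R[X]} {N : Matrix κ ι R[X]} {d : ℕ} (hB : ∀ i j, (B i j).natDegree ≤ d)
    (hN : ∀ i j, (N i j).natDegree ≤ d) (t : κ) (j : ι) :
    ((B.adjugate * N) t j).natDegree ≤ Fintype.card κ * d := by
  have hcramer : (B.adjugate * N) t j = (B.updateCol t fun s => N s j).det := by
    rw [← Matrix.cramer_apply, Matrix.cramer_eq_adjugate_mulVec]
    rfl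
  rw [hcramer]
  refine natDegree_det_le fun a b => ?_
  rw [Matrix.updateCol_apply]
  split_ifs
  exacts [hN _ _, hB _ _]

theorem natDegree_le_of_mul_eq_sum [NoZeroDivisors R] {ι : Type*} [Fintype ι] {δ z : R[X]}
    (hδ : δ ≠ 0) {v r : ι → R[X]} {D : ℕ} (hv : ∀ j, (v j).natDegree ≤ D)
    (hr : ∀ j, (r j).degree < δ.degree) (h : δ * z = ∑ j, v j * r j) : z.natDegree ≤ D := by
  rcases eq_or_ne z 0 with rfl | hz
  · simp
  have hsum : (∑ j, v j * r j).natDegree ≤ D + (δ.natDegree - 1) := by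
    refine natDegree_sum_le_of_forall_le _ _ fun j _ => ?_
    rcases eq_or_ne (r j) 0 with hrj | hrj
    · simp [hrj]
    have := natDegree_lt_natDegree hrj (hr j)
    exact natDegree_mul_le.trans (by have := hv j; omega)
  have := natDegree_mul hδ hz
  rw [h] at this
  omega

theorem exists_map_eq_smul {K ι : Type*} [CommRing K] [Algebra R K] (M : Submonoid R)
    [IsLocalization M K] [Finite ι] (w : ι → K[X]) :
    ∃ b ∈ M, ∃ c : ι → R[X], (fun j => (c j).map (algebraMap R K)) = b • w := by
  classical
  cases nonempty_fintype ι
  obtain ⟨b, hb⟩ := IsLocalization.exist_integer_multiples M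
    (Finset.univ.sigma fun j => (w j).support) fun p => (w p.1).coeff p.2
  have hlifts : ∀ j, (b : R) • w j ∈ lifts (algebraMap R K) := fun j =>
    (lifts_iff_coeff_lifts _).2 fun n => by
      rw [coeff_smul]
      by_cases hn : n ∈ (w j).support
      · exact hb ⟨j, n⟩ (Finset.mem_sigma.2 ⟨Finset.mem_univ j, hn⟩)
      · rw [notMem_support_iff.1 hn, smul_zero]
        exact ⟨0, map_zero _⟩
  choose c hc using fun j => (mem_lifts _).1 (hlifts j)
  exact ⟨b, b.2, c, _root_.funext hc⟩

end Polynomial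

namespace Matrix

variable {ι ι' κ : Type*}

theorem mulVec_eq_zero_of_row_mem_span {R : Type*} [CommSemiring R] [Fintype ι']
    {M : Matrix ι ι' R} {N : Matrix κ ι' R} (hM : ∀ i, M i ∈ Submodule.span R (Set.range N.row))
    {w : ι' → R} (hw : N *ᵥ w = 0) : M *ᵥ w = 0 := by
  suffices h : ∀ v ∈ Submodule.span R (Set.range N.row), v ⬝ᵥ w = 0 from
    funext fun i => h _ (hM i)
  intro v hv
  induction hv using Submodule.span_induction with
  | mem v hv =>
    obtain ⟨t, rfl⟩ := hv
    exact congrFun hw t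
  | zero => exact zero_dotProduct w
  | add u v _ _ hu hv => rw [add_dotProduct, hu, hv, zero_add]
  | smul c v _ hv => rw [smul_dotProduct, hv, smul_zero]

theorem exists_submatrix_det_ne_zero_row_mem_span {K : Type*} [Field K] [Fintype ι] [Fintype ι']
    (M : Matrix ι ι' K) :
    ∃ (r : ℕ) (ρ : Fin r → ι) (σ : Fin r → ι'), r ≤ Fintype.card ι ∧ (M.submatrix ρ σ).det ≠ 0 ∧
      ∀ i, M i ∈ Submodule.span K (Set.range (M.submatrix ρ id).row) := by
  obtain ⟨κ, a, ha, hspan, hli⟩ := exists_linearIndependent' K M.row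
  have : Fintype κ := Fintype.ofInjective a ha
  set e := Fintype.equivFin κ
  set ρ := a ∘ e.symm
  have hliρ : LinearIndependent K (M.submatrix ρ id).row := hli.comp _ e.symm.injective
  obtain ⟨κ', b, hb, hspan', hli'⟩ := exists_linearIndependent' K (M.submatrix ρ id).col
  have : Fintype κ' := Fintype.ofInjective b hb
  have hcard : Fintype.card κ' = Fintype.card κ := by
    rw [← finrank_span_eq_card hli', hspan', ← rank_eq_finrank_span_cols, hliρ.rank_matrix,
      Fintype.card_fin]
  set σ := b ∘ (Fintype.equivFinOfCardEq hcard).symm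
  refine ⟨Fintype.card κ, ρ, σ, Fintype.card_le_of_injective a ha, ?_, fun i => ?_⟩
  · have hcols : LinearIndependent K (M.submatrix ρ σ).col := hli'.comp _ (Equiv.injective _)
    exact ((isUnit_iff_isUnit_det _).1 (linearIndependent_cols_iff_isUnit.1 hcols)).ne_zero
  · have hrange : Set.range (M.submatrix ρ id).row = Set.range (M.row ∘ a) :=
      e.symm.surjective.range_comp (M.row ∘ a)
    rw [hrange, hspan]
    exact Submodule.subset_span ⟨i, rfl⟩

theorem exists_submatrix_det_ne_zero_ker_le {R : Type*} [CommRing R] [IsDomain R]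
    [Fintype ι] [Fintype ι'] (A : Matrix ι ι' R) :
    ∃ (r : ℕ) (ρ : Fin r → ι) (σ : Fin r → ι'), r ≤ Fintype.card ι ∧ (A.submatrix ρ σ).det ≠ 0 ∧
      LinearMap.ker (A.submatrix ρ id).mulVecLin ≤ LinearMap.ker A.mulVecLin := by
  set φ := algebraMap R (FractionRing R)
  have hφ : Function.Injective φ := IsFractionRing.injective R _
  obtain ⟨r, ρ, σ, hr, hdet, hspan⟩ := (A.map φ).exists_submatrix_det_ne_zero_row_mem_span
  refine ⟨r, ρ, σ, hr, fun h => hdet ?_, fun w hw => ?_⟩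
  · rw [submatrix_map, ← RingHom.mapMatrix_apply, ← RingHom.map_det, h, map_zero]
  · rw [LinearMap.mem_ker, mulVecLin_apply] at hw ⊢
    refine funext fun i => hφ ?_
    have hwφ : (A.map φ).submatrix ρ id *ᵥ (φ ∘ w) = 0 := by
      funext t
      rw [submatrix_map, ← RingHom.map_mulVec, hw, Pi.zero_apply, map_zero, Pi.zero_apply]
    rw [RingHom.map_mulVec, mulVec_eq_zero_of_row_mem_span hspan hwφ, Pi.zero_apply,
      Pi.zero_apply, map_zero]

section CramerKernel

variable {R : Type*} [CommRing R] [DecidableEq ι'] [Fintype κ] [DecidableEq κ]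

/-- Column `j` is `det B • e_j` minus the solution of `B x = det B • (A.submatrix ρ id).col j`
given by Cramer's rule, placed at the positions `σ`; here `B = A.submatrix ρ σ`. -/
noncomputable def cramerKernel (A : Matrix ι ι' R) (ρ : κ → ι) (σ : κ → ι') : Matrix ι' ι' R :=
  (A.submatrix ρ σ).det • 1 -
    (1 : Matrix ι' ι' R).submatrix id σ * ((A.submatrix ρ σ).adjugate * A.submatrix ρ id)

theorem natDegree_cramerKernel_apply_le {A : Matrix ι ι' R[X]} {d : ℕ}
    (hA : ∀ i j, (A i j).natDegree ≤ d) (ρ : κ → ι) (σ : κ → ι') (k j : ι') :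
    (A.cramerKernel ρ σ k j).natDegree ≤ Fintype.card κ * d := by
  have hdet := natDegree_det_le (M := A.submatrix ρ σ) fun _ _ => hA _ _
  rw [cramerKernel, sub_apply, smul_apply, one_apply, smul_eq_mul]
  refine (natDegree_sub_le _ _).trans (max_le ?_ ?_)
  · split_ifs <;> simp [hdet]
  · rw [mul_apply]
    refine natDegree_sum_le_of_forall_le _ _ fun t _ => ?_
    rw [submatrix_apply, one_apply]
    split_ifs
    · rw [one_mul]
      exact natDegree_adjugate_mul_apply_le (fun _ _ => hA _ _) (fun _ _ => hA _ _) t j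
    · simp

variable [Fintype ι'] (A : Matrix ι ι' R) (ρ : κ → ι) (σ : κ → ι')

theorem submatrix_mul_cramerKernel : A.submatrix ρ id * A.cramerKernel ρ σ = 0 := by
  have hcols : A.submatrix ρ id * (1 : Matrix ι' ι' R).submatrix id σ = A.submatrix ρ σ := by
    rw [← submatrix_mul _ _ _ _ _ Function.bijective_id, Matrix.mul_one]
  rw [cramerKernel, Matrix.mul_sub, Matrix.mul_smul, Matrix.mul_one, ← Matrix.mul_assoc, hcols,
    ← Matrix.mul_assoc, mul_adjugate, Matrix.smul_mul, Matrix.one_mul, sub_self]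

theorem cramerKernel_mulVec {w : ι' → R} (hw : A.submatrix ρ id *ᵥ w = 0) :
    A.cramerKernel ρ σ *ᵥ w = (A.submatrix ρ σ).det • w := by
  rw [cramerKernel, sub_mulVec, smul_mulVec, one_mulVec, ← mulVec_mulVec, ← mulVec_mulVec, hw,
    mulVec_zero, mulVec_zero, sub_zero]

end CramerKernel

section SolutionsDegreeLE

variable {R : Type*} [CommRing R] [Fintype ι']

noncomputable def solutionsDegreeLE (A : Matrix ι ι' R[X]) (D : ℕ) : Submodule R (ι' → R[X]) :=
  (LinearMap.ker A.mulVecLin).restrictScalars R ⊓ Submodule.pi Set.univ fun _ => degreeLE R D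

theorem mem_solutionsDegreeLE {A : Matrix ι ι' R[X]} {D : ℕ} {w : ι' → R[X]} :
    w ∈ A.solutionsDegreeLE D ↔ A *ᵥ w = 0 ∧ ∀ j, (w j).natDegree ≤ D := by
  simp [solutionsDegreeLE, mem_degreeLE, natDegree_le_iff_degree_le]

theorem solutionsDegreeLE_fg [IsNoetherianRing R] (A : Matrix ι ι' R[X]) (D : ℕ) :
    (A.solutionsDegreeLE D).FG := by
  classical
  refine Submodule.FG.of_le (Submodule.fg_pi fun _ => ?_) inf_le_right
  rw [degreeLE_eq_span_X_pow]
  exact Submodule.fg_span (Finset.finite_toSet _)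

theorem mem_span_solutionsDegreeLE_of_smul_eq_mulVec {k : Type*} [Field k] [Fintype κ]
    {A : Matrix ι ι' k[X]} {V : Matrix ι' κ k[X]} {D : ℕ}
    (hV : ∀ j, V.col j ∈ A.solutionsDegreeLE D) {δ : k[X]} (hδ : δ ≠ 0) {Y : ι' → k[X]}
    {c : κ → k[X]} (hY : A *ᵥ Y = 0) (h : δ • Y = V *ᵥ c) :
    Y ∈ Submodule.span k[X] (A.solutionsDegreeLE D : Set (ι' → k[X])) := by
  set q : κ → k[X] := fun j => c j / δ
  have hVq : V *ᵥ q ∈ Submodule.span k[X] (Set.range V.col) := by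
    rw [← range_mulVecLin]
    exact LinearMap.mem_range_self _ q
  have hAVq : A *ᵥ (V *ᵥ q) = 0 := by
    have hcols : Submodule.span k[X] (Set.range V.col) ≤ LinearMap.ker A.mulVecLin :=
      Submodule.span_le.2 <| Set.range_subset_iff.2 fun j => (mem_solutionsDegreeLE.1 (hV j)).1
    exact hcols hVq
  have hδZ : δ • (Y - V *ᵥ q) = V *ᵥ fun j => c j % δ := by
    have hmod : (fun j => c j % δ) = c - δ • q := by
      funext j
      simp [q, EuclideanDomain.mod_eq_sub_mul_div]
    rw [smul_sub, h, hmod, mulVec_sub, mulVec_smul]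
  have hZ : Y - V *ᵥ q ∈ A.solutionsDegreeLE D := by
    refine mem_solutionsDegreeLE.2 ⟨by rw [mulVec_sub, hY, hAVq, sub_zero], fun i => ?_⟩
    refine natDegree_le_of_mul_eq_sum hδ (fun j => (mem_solutionsDegreeLE.1 (hV j)).2 i)
      (fun j => degree_mod_lt (c j) hδ) ?_
    simpa [mulVec, dotProduct] using congrFun hδZ i
  simpa using Submodule.add_mem _ (Submodule.subset_span hZ)
    (Submodule.span_mono (Set.range_subset_iff.2 hV) hVq)

theorem mem_span_solutionsDegreeLE {k : Type*} [Field k] [Fintype ι] [DecidableEq ι']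
    {A : Matrix ι ι' k[X]} {d : ℕ} (hA : ∀ i j, (A i j).natDegree ≤ d) {Y : ι' → k[X]}
    (hY : A *ᵥ Y = 0) :
    Y ∈ Submodule.span k[X] (A.solutionsDegreeLE (Fintype.card ι * d) : Set (ι' → k[X])) := by
  obtain ⟨r, ρ, σ, hr, hdet, hker⟩ := A.exists_submatrix_det_ne_zero_ker_le
  have hYρ : A.submatrix ρ id *ᵥ Y = 0 := funext fun t => congrFun hY (ρ t)
  refine mem_span_solutionsDegreeLE_of_smul_eq_mulVec (fun j => ?_) hdet hY
    (cramerKernel_mulVec A ρ σ hYρ).symm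
  refine mem_solutionsDegreeLE.2 ⟨hker ?_, fun i => ?_⟩
  · exact _root_.funext fun t => congrFun (congrFun (submatrix_mul_cramerKernel A ρ σ) t) j
  · refine (natDegree_cramerKernel_apply_le hA ρ σ i j).trans ?_
    rw [Fintype.card_fin]
    exact Nat.mul_le_mul_right d hr

end SolutionsDegreeLE

end Matrix

open Matrix in
theorem exists_finset_natDegree_le_and_span_eq_ker {R K ι ι' : Type*} [CommRing R] [IsDomain R]
    [Field K] [Algebra R K] [IsFractionRing R K] [Fintype ι] [Fintype ι'] (F : Matrix ι ι' R[X])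
    {d : ℕ} (hd : ∀ i j, (F i j).natDegree ≤ d) :
    ∃ S : Finset (ι' → R[X]), (∀ v ∈ S, ∀ j, (v j).natDegree ≤ Fintype.card ι * d) ∧
      ∀ Y : ι' → K[X],
        Y ∈ Submodule.span K[X] ((fun v : ι' → R[X] => fun j => (v j).map (algebraMap R K)) ''
          (S : Set (ι' → R[X]))) ↔ (F.map fun q => q.map (algebraMap R K)) *ᵥ Y = 0 := by
  classical
  set A := F.map fun q => q.map (algebraMap R K)
  obtain ⟨S₀, hS₀⟩ := A.solutionsDegreeLE_fg (Fintype.card ι * d)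
  have hS₀A : ∀ w ∈ S₀, w ∈ A.solutionsDegreeLE (Fintype.card ι * d) := fun w hw => by
    rw [← hS₀]
    exact Submodule.subset_span hw
  choose b hb c hc using fun w : ι' → K[X] => exists_map_eq_smul (nonZeroDivisors R) w
  set φ : (ι' → R[X]) → ι' → K[X] := fun v j => (v j).map (algebraMap R K)
  have hφc : ∀ w, φ (c w) = b w • w := hc
  have hS₀span : ∀ w ∈ S₀, w ∈ Submodule.span K[X] (φ '' (S₀.image c : Set (ι' → R[X]))) := by
    intro w hw
    have hbw : b w • w ∈ Submodule.span K[X] (φ '' (S₀.image c : Set (ι' → R[X]))) :=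
      Submodule.subset_span ⟨c w, Finset.mem_coe.2 (Finset.mem_image_of_mem c hw), hφc w⟩
    rw [← algebraMap_smul K (b w) w] at hbw
    have hb0 : algebraMap R K (b w) ≠ 0 :=
      IsFractionRing.to_map_ne_zero_of_mem_nonZeroDivisors (hb w)
    simpa only [inv_smul_smul₀ hb0] using
      Submodule.smul_of_tower_mem _ (algebraMap R K (b w))⁻¹ hbw
  refine ⟨S₀.image c, ?_, fun Y => ⟨fun hY => ?_, fun hY => ?_⟩⟩
  · intro v hv j
    obtain ⟨w, hw, rfl⟩ := Finset.mem_image.1 hv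
    rw [← natDegree_map_eq_of_injective (IsFractionRing.injective R K), congrFun (hc w) j]
    exact (natDegree_smul_le _ _).trans ((mem_solutionsDegreeLE.1 (hS₀A w hw)).2 j)
  · refine (Submodule.span_le (p := LinearMap.ker A.mulVecLin)).2 ?_ hY
    rintro _ ⟨v, hv, rfl⟩
    obtain ⟨w, hw, rfl⟩ := Finset.mem_image.1 (Finset.mem_coe.1 hv)
    rw [SetLike.mem_coe, hφc w]
    exact Submodule.smul_of_tower_mem _ _ (mem_solutionsDegreeLE.1 (hS₀A w hw)).1
  · have hA : ∀ i j, (A i j).natDegree ≤ d := fun i j => natDegree_map_le.trans (hd i j)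
    refine Submodule.span_le.2 ?_ (mem_span_solutionsDegreeLE hA hY)
    rw [← hS₀]
    exact (Submodule.span_le (p := (Submodule.span K[X] _).restrictScalars K)).2 hS₀span

/-- Let F ∈ ℤ[x]^{n×m} with d = deg(F) the maximum degree of its entries.
Then the ℚ[x]-module Sol_{ℚ[x]}(F) = {Y ∈ ℚ[x]^m : FY = 0} is generated by finitely many
vectors lying in ℤ[x]^m whose entries have degree at most n·d. -/
theorem stmt10 {n m : ℕ} (F : Matrix (Fin n) (Fin m) (Polynomial ℤ))
    (d : ℕ) (hd : ∀ i j, (F i j).natDegree ≤ d) :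
    ∃ S : Finset (Fin m → Polynomial ℤ),
      (∀ v ∈ S, ∀ j, (v j).natDegree ≤ n * d) ∧
      ∀ Y : Fin m → Polynomial ℚ,
        Y ∈ Submodule.span (Polynomial ℚ)
          ((fun v : Fin m → Polynomial ℤ => fun j => (v j).map (Int.castRingHom ℚ)) ''
            (↑S : Set (Fin m → Polynomial ℤ))) ↔
        (F.map fun q => q.map (Int.castRingHom ℚ)).mulVec Y = 0 := by
  have := exists_finset_natDegree_le_and_span_eq_ker (K := ℚ) F hd
  rwa [algebraMap_int_eq, Fintype.card_fin] at this
end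

section
/- Let M be a ℤ[x]-submodule of ℤ[x]^m. Suppose that for each prime p a finite subset S_p ⊆ M is given such that the image of S_p in ℤ_(p)[x]^m generates, as a ℤ_(p)[x]-module, the ℤ_(p)[x]-submodule of ℤ_(p)[x]^m generated by the image of M. Then the union ⋃_p S_p, taken over all primes p, generates M as a ℤ[x]-module. -/
open Polynomial

instance span_int_prime_isPrime (p : ℕ) [hp : Fact p.Prime] :
    (Ideal.span {(p : ℤ)}).IsPrime :=
  (Ideal.span_singleton_prime (by exact_mod_cast hp.out.ne_zero)).mpr
    (Nat.prime_iff_prime_int.mp hp.out)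

/-- ℤ_(p): the localization of ℤ at the prime ideal (p). -/
abbrev ZLoc (p : ℕ) [Fact p.Prime] : Type :=
  Localization.AtPrime (Ideal.span {(p : ℤ)})

/-!
Fix `v ∈ M`. For each prime `p`, the image of `v` lies in the `ℤ_(p)[x]`-span of the image of
`S_p`; clearing denominators gives an integer `d` prime to `p` with `d • v` in the `ℤ[x]`-span
`N` of `⋃ S_p`. The integers `d` with `d • v ∈ N` form an ideal of `ℤ` contained in no `(p)`,
so it contains `1` and `v ∈ N`.
-/

theorem Int.ideal_eq_top_of_forall_prime_exists_not_dvd (I : Ideal ℤ)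
    (h : ∀ p : ℕ, p.Prime → ∃ d ∈ I, ¬ (p : ℤ) ∣ d) : I = ⊤ := by
  set g := Submodule.IsPrincipal.generator I
  have hg : g.natAbs = 1 := by
    by_contra hne
    obtain ⟨p, hp, hpg⟩ := Nat.exists_prime_and_dvd hne
    obtain ⟨d, hdI, hpd⟩ := h p hp
    exact hpd ((Int.natCast_dvd.mpr hpg).trans
      ((Submodule.IsPrincipal.mem_iff_generator_dvd I).mp hdI))
  rw [← Ideal.span_singleton_generator I, Ideal.span_singleton_eq_top]
  exact Int.isUnit_iff_natAbs_eq.mpr hg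

theorem Submodule.mem_of_forall_prime_exists_intCast_smul_mem {R M : Type*} [Ring R]
    [AddCommGroup M] [Module R M] (N : Submodule R M) (v : M)
    (h : ∀ p : ℕ, p.Prime → ∃ d : ℤ, ¬ (p : ℤ) ∣ d ∧ (d : R) • v ∈ N) : v ∈ N := by
  have htop : (N.colon {v}).comap (Int.castRingHom R) = ⊤ :=
    Int.ideal_eq_top_of_forall_prime_exists_not_dvd _ fun p hp =>
      (h p hp).imp fun d hd => ⟨Submodule.mem_colon_singleton.mpr hd.2, hd.1⟩
  have h1 : (1 : ℤ) ∈ (N.colon {v}).comap (Int.castRingHom R) := htop ▸ Submodule.mem_top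
  simpa using Submodule.mem_colon_singleton.mp (Ideal.mem_comap.mp h1)

section ClearDenominators

attribute [local instance] Polynomial.algebra

variable {R A ι : Type*} [CommRing R] [CommRing A] [Algebra R A]

theorem Polynomial.exists_C_smul_mem_span_of_map_mem_span (S : Submonoid R) [IsLocalization S A]
    (hS : S ≤ nonZeroDivisors R) {T : Set (ι → R[X])} {v : ι → R[X]}
    (hv : (fun j => (v j).map (algebraMap R A)) ∈
      Submodule.span A[X] ((fun w : ι → R[X] => fun j => (w j).map (algebraMap R A)) '' T)) :
    ∃ s ∈ S, C s • v ∈ Submodule.span R[X] T := by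
  have := Polynomial.isLocalization S A
  let F : (ι → R[X]) →ₗ[R[X]] ι → A[X] := (Algebra.linearMap R[X] A[X]).compLeft ι
  have hF : Function.Injective F :=
    (Polynomial.map_injective _ (IsLocalization.injective A hS)).comp_left
  -- `A[X]` is the localization of `R[X]` at `C '' S`, so `F v = (C s)⁻¹ • F u` with `u ∈ span T`.
  obtain ⟨y, hy, z, hvy⟩ := (IsLocalization.mem_span_iff (S.map C)).mp hv
  obtain ⟨s, hs, hsz⟩ := Submonoid.mem_map.mp z.2
  change y ∈ Submodule.span R[X] (F '' T) at hy
  rw [Submodule.span_image] at hy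
  obtain ⟨u, hu, rfl⟩ := hy
  refine ⟨s, hs, hF (a₁ := C s • v) ?_ ▸ hu⟩
  rw [hsz, map_smul, ← algebraMap_smul A[X], show F v = _ from hvy, smul_smul,
    IsLocalization.mk'_spec', map_one, one_smul]

end ClearDenominators

/-- Aschenbrenner: Let M be a ℤ[x]-submodule of ℤ[x]^m. Suppose for each
prime p a finite subset S_p ⊆ M is given whose image in ℤ_(p)[x]^m generates the
ℤ_(p)[x]-submodule generated by the image of M. Then ⋃_p S_p generates M over ℤ[x]. -/
theorem stmt13 {m : ℕ} (M : Submodule (Polynomial ℤ) (Fin m → Polynomial ℤ))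
    (S : ℕ → Finset (Fin m → Polynomial ℤ))
    (hS : ∀ (p : ℕ) [Fact p.Prime],
      (↑(S p) : Set (Fin m → Polynomial ℤ)) ⊆ (M : Set (Fin m → Polynomial ℤ)) ∧
      Submodule.span (Polynomial (ZLoc p))
        ((fun v : Fin m → Polynomial ℤ => fun j => (v j).map (algebraMap ℤ (ZLoc p))) ''
          (↑(S p) : Set (Fin m → Polynomial ℤ))) =
      Submodule.span (Polynomial (ZLoc p))
        ((fun v : Fin m → Polynomial ℤ => fun j => (v j).map (algebraMap ℤ (ZLoc p))) ''
          (M : Set (Fin m → Polynomial ℤ)))) :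
    Submodule.span (Polynomial ℤ)
      (⋃ (p : ℕ) (_ : p.Prime), (↑(S p) : Set (Fin m → Polynomial ℤ))) = M := by
  refine le_antisymm (Submodule.span_le.mpr <| Set.iUnion₂_subset fun p hp =>
    haveI := Fact.mk hp; (hS p).1) fun v hv => ?_
  refine Submodule.mem_of_forall_prime_exists_intCast_smul_mem _ v fun p hp => ?_
  have := Fact.mk hp
  have hv_loc : (fun j => (v j).map (algebraMap ℤ (ZLoc p))) ∈ Submodule.span (ZLoc p)[X]
      ((fun w : Fin m → ℤ[X] => fun j => (w j).map (algebraMap ℤ (ZLoc p))) '' S p) :=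
    (hS p).2 ▸ Submodule.subset_span ⟨v, hv, rfl⟩
  have hsub : (S p : Set (Fin m → ℤ[X])) ⊆ ⋃ (p : ℕ) (_ : p.Prime), (S p : Set _) :=
    fun _ hx => Set.mem_iUnion₂.mpr ⟨p, hp, hx⟩
  obtain ⟨d, hd, hdv⟩ := Polynomial.exists_C_smul_mem_span_of_map_mem_span _
    (Ideal.primeCompl_le_nonZeroDivisors (Ideal.span {(p : ℤ)})) hv_loc
  refine ⟨d, fun hpd => hd (Ideal.mem_span_singleton.mpr hpd), ?_⟩
  rw [← C_eq_intCast]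
  exact Submodule.span_mono hsub hdv
end
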